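/- arXiv:2105.09626 — 2 statements merged into one kernel-verified Lean document; each statement's English description precedes it below -/
import Mathlib

section
/- Suppose for every pair of consecutive samples of a trajectory there exists g with V_p g = v_t, X_p g = x_t, V_f g = v_{t+1}, X_f g = x_{t+1}, and suppose ker([V_p; X_p; V_f]) ⊆ ker(X_f). Define, with Ξ = ([V_p; X_p; V_f])† partitioned as [Ξ_{V_p} Ξ_{X_p} Ξ_{V_f}], the matrices A_U = X_f Ξ_{X_p}, D_U = X_f Ξ_{V_f}, B_U = X_f(Ξ_{V_p} + Ξ_{X_p} X_f Ξ_{V_f}). Then the sequence z_t := x_t − D_U v_t satisfies z_{t+1} = A_U z_t + B_U v_t and x_t = z_t + D_U v_t for all t along the trajectory. -/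
open Matrix

/-- The stacked data matrix [V_p; X_p; V_f]. -/
def stack3M {mp n Nc : ℕ} (Vp : Matrix (Fin mp) (Fin Nc) ℝ)
    (Xp : Matrix (Fin n) (Fin Nc) ℝ) (Vf : Matrix (Fin mp) (Fin Nc) ℝ) :
    Matrix (Fin mp ⊕ (Fin n ⊕ Fin mp)) (Fin Nc) ℝ :=
  Matrix.of fun i j => Sum.elim (fun a => Vp a j) (Sum.elim (fun a => Xp a j) (fun a => Vf a j)) i

/-- The stacked vector (v_t; x_t; v_{t+1}). -/
def stack3V {mp n : ℕ} (v₁ : Fin mp → ℝ) (x : Fin n → ℝ) (v₂ : Fin mp → ℝ) :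
    Fin mp ⊕ (Fin n ⊕ Fin mp) → ℝ :=
  Sum.elim v₁ (Sum.elim x v₂)

/-- If every pair of consecutive samples of the trajectory lies in the
range of [V_p; X_p; V_f; X_f] and ker([V_p; X_p; V_f]) ⊆ ker(X_f), then with
A_U = X_f Ξ_{X_p}, B_U = X_f(Ξ_{V_p} + Ξ_{X_p} X_f Ξ_{V_f}), D_U = X_f Ξ_{V_f}
(Ξ the Moore–Penrose pseudoinverse of the stacked matrix), the sequence
z_t = x_t − D_U v_t satisfies z_{t+1} = A_U z_t + B_U v_t and x_t = z_t + D_U v_t. -/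
theorem stmt5 {mp n Nc : ℕ}
    (Vp Vf : Matrix (Fin mp) (Fin Nc) ℝ) (Xp Xf : Matrix (Fin n) (Fin Nc) ℝ)
    (M : Matrix (Fin mp ⊕ (Fin n ⊕ Fin mp)) (Fin Nc) ℝ) (hM : M = stack3M Vp Xp Vf)
    (Ξ : Matrix (Fin Nc) (Fin mp ⊕ (Fin n ⊕ Fin mp)) ℝ)
    (hΞ : M * Ξ * M = M ∧ Ξ * M * Ξ = Ξ ∧ (M * Ξ)ᵀ = M * Ξ ∧ (Ξ * M)ᵀ = Ξ * M)
    (ΞVp : Matrix (Fin Nc) (Fin mp) ℝ) (hΞVp : ∀ i a, ΞVp i a = Ξ i (Sum.inl a))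
    (ΞXp : Matrix (Fin Nc) (Fin n) ℝ) (hΞXp : ∀ i a, ΞXp i a = Ξ i (Sum.inr (Sum.inl a)))
    (ΞVf : Matrix (Fin Nc) (Fin mp) ℝ) (hΞVf : ∀ i a, ΞVf i a = Ξ i (Sum.inr (Sum.inr a)))
    (hker : ∀ g : Fin Nc → ℝ, M.mulVec g = 0 → Xf.mulVec g = 0)
    (v : ℕ → Fin mp → ℝ) (x : ℕ → Fin n → ℝ)
    (htraj : ∀ t : ℕ, ∃ g : Fin Nc → ℝ,
      Vp.mulVec g = v t ∧ Xp.mulVec g = x t ∧ Vf.mulVec g = v (t + 1) ∧ Xf.mulVec g = x (t + 1))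
    (AU : Matrix (Fin n) (Fin n) ℝ) (hAU : AU = Xf * ΞXp)
    (DU : Matrix (Fin n) (Fin mp) ℝ) (hDU : DU = Xf * ΞVf)
    (BU : Matrix (Fin n) (Fin mp) ℝ) (hBU : BU = Xf * (ΞVp + ΞXp * Xf * ΞVf))
    (z : ℕ → Fin n → ℝ) (hz : ∀ t, z t = x t - DU.mulVec (v t)) :
    (∀ t, z (t + 1) = AU.mulVec (z t) + BU.mulVec (v t)) ∧
      (∀ t, x t = z t + DU.mulVec (v t)) := by
  have hsplit : ∀ (a : Fin mp → ℝ) (b : Fin n → ℝ) (c : Fin mp → ℝ),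
      (Xf * Ξ).mulVec (stack3V a b c) =
        (Xf * ΞVp).mulVec a + (Xf * ΞXp).mulVec b + (Xf * ΞVf).mulVec c := by
    intro a b c
    funext i
    simp only [mulVec, dotProduct, Fintype.sum_sum_type, Pi.add_apply, mul_apply,
      stack3V, Sum.elim_inl, Sum.elim_inr, ← hΞVp, ← hΞXp, ← hΞVf]
    ring
  have key : ∀ t, x (t + 1) =
      (Xf * ΞVp).mulVec (v t) + AU.mulVec (x t) + DU.mulVec (v (t + 1)) := by
    intro t
    obtain ⟨g, hg1, hg2, hg3, hg4⟩ := htraj t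
    have hMg : M.mulVec g = stack3V (v t) (x t) (v (t + 1)) := by
      funext i
      cases i with
      | inl a =>
        show (M.mulVec g) (Sum.inl a) = v t a
        rw [← hg1]
        simp [hM, stack3M, mulVec, dotProduct]
      | inr b =>
        cases b with
        | inl a =>
          show (M.mulVec g) (Sum.inr (Sum.inl a)) = x t a
          rw [← hg2]
          simp [hM, stack3M, mulVec, dotProduct]
        | inr a =>
          show (M.mulVec g) (Sum.inr (Sum.inr a)) = v (t + 1) a
          rw [← hg3]
          simp [hM, stack3M, mulVec, dotProduct]
    have h0 : M.mulVec (Ξ.mulVec (M.mulVec g) - g) = 0 := by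
      rw [Matrix.mulVec_sub, Matrix.mulVec_mulVec, Matrix.mulVec_mulVec, hΞ.1, sub_self]
    have h2 : Xf.mulVec (Ξ.mulVec (M.mulVec g)) = Xf.mulVec g := by
      have h1 := hker _ h0
      rw [Matrix.mulVec_sub, sub_eq_zero] at h1
      exact h1
    calc x (t + 1) = Xf.mulVec g := hg4.symm
      _ = (Xf * Ξ).mulVec (stack3V (v t) (x t) (v (t + 1))) := by
          rw [← hMg, ← Matrix.mulVec_mulVec, h2]
      _ = _ := by rw [hsplit, hAU, hDU]
  constructor
  · intro t
    have hBU' : BU = Xf * ΞVp + AU * DU := by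
      rw [hBU, hAU, hDU, Matrix.mul_add, Matrix.mul_assoc, Matrix.mul_assoc]
    rw [hz (t + 1), key t, hz t, hBU']
    rw [Matrix.mulVec_sub, Matrix.add_mulVec, Matrix.mulVec_mulVec]
    abel
  · intro t
    rw [hz t]
    abel
end

section
/- Suppose every trajectory of the system and every compatible trajectory coincide (T_c = T_G), meaning: for each t, (v_t, x_t, v_{t+1}, x_{t+1}) ∈ range([V_p; X_p; V_f; X_f]), and ker([V_p; X_p; V_f]) ⊆ ker(X_f), and A_U := X_f Ξ_{X_p} is Schur stable. Then for any true trajectory (v_t, x_t) of the system and any initial guess x̂_0, the estimates defined by x̂_{t+1} = X_f Ξ (v_t; x̂_t; v_{t+1}) satisfy x_t − x̂_t = A_U^t (x_0 − x̂_0) → 0 as t → ∞. -/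
open Matrix Filter

/-- A real matrix is Schur stable if all its complex eigenvalues have modulus < 1. -/
def SchurStable {n : ℕ} (A : Matrix (Fin n) (Fin n) ℝ) : Prop :=
  ∀ μ ∈ spectrum ℂ (A.map (algebraMap ℝ ℂ)), ‖μ‖ < 1

/-! Since `Ξ` is an inner inverse of `M` and `ker M ⊆ ker X_f`, the map `X_f Ξ M` agrees with
`X_f`; hence the true trajectory obeys the same recursion as the estimates. The two recursions
differ only in the state block of the stacked vector, so the error evolves by
`e_{t+1} = X_f Ξ_{X_p} e_t = A_U e_t`. Schur stability says the spectral radius of `A_U` is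
below one, and Gelfand's formula then bounds `‖A_U ^ t‖` by a geometric sequence. -/

open scoped NNReal Topology

theorem tendsto_pow_atTop_nhds_zero_of_spectralRadius_lt_one {A : Type*} [NormedRing A]
    [NormedAlgebra ℂ A] [CompleteSpace A] {a : A} (h : spectralRadius ℂ a < 1) :
    Tendsto (a ^ ·) atTop (𝓝 0) := by
  obtain ⟨r, hρr, hr1⟩ := ENNReal.lt_iff_exists_nnreal_btwn.mp h
  have hbound : ∀ᶠ n : ℕ in atTop, ‖a ^ n‖ ≤ (r : ℝ) ^ n := by
    have hgelfand := spectrum.pow_nnnorm_pow_one_div_tendsto_nhds_spectralRadius a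
    filter_upwards [hgelfand.eventually_lt_const hρr, eventually_ge_atTop 1] with n hn hn1
    have hpow := ENNReal.rpow_le_rpow hn.le (by positivity : (0 : ℝ) ≤ n)
    rw [← ENNReal.rpow_mul, one_div, inv_mul_cancel₀ (by positivity), ENNReal.rpow_one,
      ENNReal.rpow_natCast, ← ENNReal.coe_pow, ENNReal.coe_le_coe] at hpow
    exact_mod_cast hpow
  refine squeeze_zero_norm' hbound ?_
  exact tendsto_pow_atTop_nhds_zero_of_lt_one r.coe_nonneg (by exact_mod_cast hr1)

theorem SchurStable.tendsto_pow {n : ℕ} {A : Matrix (Fin n) (Fin n) ℝ} (hA : SchurStable A) :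
    Tendsto (A ^ ·) atTop (𝓝 0) := by
  rcases isEmpty_or_nonempty (Fin n) with _ | _
  · exact tendsto_const_nhds.congr fun _ => Subsingleton.elim _ _
  -- any algebra norm on matrices will do, since the conclusion only involves the topology
  let := Matrix.linftyOpNormedRing (n := Fin n) (α := ℂ)
  let := Matrix.linftyOpNormedAlgebra (n := Fin n) (R := ℂ) (α := ℂ)
  have hρ : spectralRadius ℂ (A.map (algebraMap ℝ ℂ)) < (1 : ℝ≥0) :=
    spectrum.spectralRadius_lt_of_forall_lt _ fun z hz => by
      simpa [← NNReal.coe_lt_coe] using hA z hz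
  have hC := tendsto_pow_atTop_nhds_zero_of_spectralRadius_lt_one (by exact_mod_cast hρ)
  have hre := ((continuous_id.matrix_map Complex.continuous_re).tendsto 0).comp hC
  have hmap : ∀ t, ((A.map (algebraMap ℝ ℂ)) ^ t).map Complex.re = A ^ t := fun t => by
    rw [← Matrix.map_pow, Matrix.map_map]; ext; simp
  simpa only [Function.comp_def, id_eq, hmap, Matrix.map_zero _ Complex.zero_re] using hre

theorem SchurStable.tendsto_pow_mulVec {n : ℕ} {A : Matrix (Fin n) (Fin n) ℝ}
    (hA : SchurStable A) (e : Fin n → ℝ) :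
    Tendsto (fun t : ℕ => (A ^ t) *ᵥ e) atTop (𝓝 0) := by
  have hcont : Continuous fun B : Matrix (Fin n) (Fin n) ℝ => B *ᵥ e :=
    continuous_id.matrix_mulVec continuous_const
  have h := (hcont.tendsto 0).comp hA.tendsto_pow
  rwa [zero_mulVec] at h

theorem pow_mulVec_of_succ_eq_mulVec {R ι : Type*} [Semiring R] [Fintype ι] [DecidableEq ι]
    {A : Matrix ι ι R} {e : ℕ → ι → R} (he : ∀ t, e (t + 1) = A *ᵥ e t) (t : ℕ) :
    e t = (A ^ t) *ᵥ e 0 := by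
  induction t with
  | zero => simp
  | succ t ih => rw [he, ih, mulVec_mulVec, pow_succ']

theorem mulVec_mulVec_mulVec_eq_of_mul_mul_self {R ι κ μ : Type*} [Ring R] [Fintype ι]
    [Fintype κ] {M : Matrix κ ι R} {Ξ : Matrix ι κ R} {X : Matrix μ ι R}
    (hΞ : M * Ξ * M = M)
    (hker : ∀ g, M *ᵥ g = 0 → X *ᵥ g = 0) (g : ι → R) :
    X *ᵥ (Ξ *ᵥ (M *ᵥ g)) = X *ᵥ g := by
  rw [← sub_eq_zero, ← mulVec_sub]
  exact hker _ (by rw [mulVec_sub, mulVec_mulVec, mulVec_mulVec, hΞ, sub_self])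

theorem mulVec_stack3V_sub_mulVec_stack3V {mp n Nc : ℕ}
    {Ξ : Matrix (Fin Nc) (Fin mp ⊕ (Fin n ⊕ Fin mp)) ℝ} {ΞXp : Matrix (Fin Nc) (Fin n) ℝ}
    (hΞXp : ∀ i a, ΞXp i a = Ξ i (Sum.inr (Sum.inl a)))
    (v₁ v₂ : Fin mp → ℝ) (x x' : Fin n → ℝ) :
    Ξ *ᵥ stack3V v₁ x v₂ - Ξ *ᵥ stack3V v₁ x' v₂ = ΞXp *ᵥ (x - x') := by
  ext i
  simp [mulVec, dotProduct, Fintype.sum_sum_type, stack3V, hΞXp, mul_sub]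

theorem stmt9_general {mp n Nc : ℕ}
    (Xf : Matrix (Fin n) (Fin Nc) ℝ)
    (M : Matrix (Fin mp ⊕ (Fin n ⊕ Fin mp)) (Fin Nc) ℝ)
    (Ξ : Matrix (Fin Nc) (Fin mp ⊕ (Fin n ⊕ Fin mp)) ℝ)
    (hΞ : M * Ξ * M = M ∧ Ξ * M * Ξ = Ξ ∧ (M * Ξ)ᵀ = M * Ξ ∧ (Ξ * M)ᵀ = Ξ * M)
    (ΞXp : Matrix (Fin Nc) (Fin n) ℝ) (hΞXp : ∀ i a, ΞXp i a = Ξ i (Sum.inr (Sum.inl a)))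
    (hker : ∀ g : Fin Nc → ℝ, M.mulVec g = 0 → Xf.mulVec g = 0)
    (AU : Matrix (Fin n) (Fin n) ℝ) (hAU : AU = Xf * ΞXp)
    (hSchur : SchurStable AU)
    (v : ℕ → Fin mp → ℝ) (x : ℕ → Fin n → ℝ)
    (htraj : ∀ t : ℕ, ∃ g : Fin Nc → ℝ,
      M.mulVec g = stack3V (v t) (x t) (v (t + 1)) ∧ Xf.mulVec g = x (t + 1))
    (xhat : ℕ → Fin n → ℝ)
    (hxhat : ∀ t, xhat (t + 1) = Xf.mulVec (Ξ.mulVec (stack3V (v t) (xhat t) (v (t + 1))))) :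
    (∀ t, x t - xhat t = (AU ^ t).mulVec (x 0 - xhat 0)) ∧
      Tendsto (fun t => x t - xhat t) atTop (nhds 0) := by
  have hx : ∀ t, x (t + 1) = Xf *ᵥ (Ξ *ᵥ stack3V (v t) (x t) (v (t + 1))) := fun t => by
    obtain ⟨g, hMg, hXfg⟩ := htraj t
    rw [← hMg, mulVec_mulVec_mulVec_eq_of_mul_mul_self hΞ.1 hker, hXfg]
  have herr : ∀ t, x (t + 1) - xhat (t + 1) = AU *ᵥ (x t - xhat t) := fun t => by
    rw [hx, hxhat, ← mulVec_sub, mulVec_stack3V_sub_mulVec_stack3V hΞXp, mulVec_mulVec, hAU]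
  have herr_closed := pow_mulVec_of_succ_eq_mulVec (e := fun t => x t - xhat t) herr
  exact ⟨herr_closed, (hSchur.tendsto_pow_mulVec _).congr fun t => (herr_closed t).symm⟩

/-- under compatibility of the true trajectory with the data,
the kernel condition, and Schur stability of A_U = X_f Ξ_{X_p}, the estimates
x̂_{t+1} = X_f Ξ (v_t; x̂_t; v_{t+1}) satisfy x_t − x̂_t = A_U^t (x_0 − x̂_0) → 0. -/
theorem stmt9 {mp n Nc : ℕ}
    (Vp Vf : Matrix (Fin mp) (Fin Nc) ℝ) (Xp Xf : Matrix (Fin n) (Fin Nc) ℝ)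
    (M : Matrix (Fin mp ⊕ (Fin n ⊕ Fin mp)) (Fin Nc) ℝ) (hM : M = stack3M Vp Xp Vf)
    (Ξ : Matrix (Fin Nc) (Fin mp ⊕ (Fin n ⊕ Fin mp)) ℝ)
    (hΞ : M * Ξ * M = M ∧ Ξ * M * Ξ = Ξ ∧ (M * Ξ)ᵀ = M * Ξ ∧ (Ξ * M)ᵀ = Ξ * M)
    (ΞXp : Matrix (Fin Nc) (Fin n) ℝ) (hΞXp : ∀ i a, ΞXp i a = Ξ i (Sum.inr (Sum.inl a)))
    (hker : ∀ g : Fin Nc → ℝ, M.mulVec g = 0 → Xf.mulVec g = 0)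
    (AU : Matrix (Fin n) (Fin n) ℝ) (hAU : AU = Xf * ΞXp)
    (hSchur : SchurStable AU)
    (v : ℕ → Fin mp → ℝ) (x : ℕ → Fin n → ℝ)
    (htraj : ∀ t : ℕ, ∃ g : Fin Nc → ℝ,
      M.mulVec g = stack3V (v t) (x t) (v (t + 1)) ∧ Xf.mulVec g = x (t + 1))
    (xhat : ℕ → Fin n → ℝ)
    (hxhat : ∀ t, xhat (t + 1) = Xf.mulVec (Ξ.mulVec (stack3V (v t) (xhat t) (v (t + 1))))) :
    (∀ t, x t - xhat t = (AU ^ t).mulVec (x 0 - xhat 0)) ∧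
      Tendsto (fun t => x t - xhat t) atTop (nhds 0) :=
  stmt9_general Xf M Ξ hΞ ΞXp hΞXp hker AU hAU hSchur v x htraj xhat hxhat
end
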